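/- arXiv:1702.07933 — 3 statements merged into one kernel-verified Lean document; each statement's English description precedes it below -/
import Mathlib

section
/- Let h^t be a vector with strictly positive entries, W a nonnegative matrix, ω a 0/1 vector, and ε > 0. Define K = diag([W^T diag(ω) W h^t + ε·1] ⊘ h^t), where ⊘ is elementwise division. Then K - W^T diag(ω) W is positive semi-definite. -/
open Matrix

/-! Write `A = Wᵀ diag(ω) W`, a symmetric matrix with nonnegative entries, so that
`K - A = (diag(A h ⊘ h) - A) + ε diag(1 ⊘ h)`. The second summand is a nonnegative diagonal matrix.
The first one is congruent, via `diag(h)`, to the weighted graph Laplacian with edge weights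
`hᵢ Aᵢⱼ hⱼ ≥ 0`, whose quadratic form is `½ ∑ᵢⱼ hᵢ Aᵢⱼ hⱼ (xᵢ - xⱼ)²`. -/

theorem Matrix.transpose_mul_diagonal_mul_self_apply_nonneg {ι κ : Type*} [Fintype κ]
    [DecidableEq κ] {W : Matrix κ ι ℝ} (hW : ∀ k i, 0 ≤ W k i) {ω : κ → ℝ} (hω : ∀ k, 0 ≤ ω k)
    (i j : ι) : 0 ≤ (Wᵀ * diagonal ω * W) i j := by
  rw [mul_apply]
  refine Finset.sum_nonneg fun k _ => ?_
  rw [mul_diagonal, transpose_apply]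
  exact mul_nonneg (mul_nonneg (hW k i) (hω k)) (hW k j)

variable {ι : Type*} [Fintype ι] [DecidableEq ι]

theorem Matrix.two_mul_dotProduct_diagonal_sum_sub_mulVec {B : Matrix ι ι ℝ}
    (hB : B.IsHermitian) (x : ι → ℝ) :
    2 * (x ⬝ᵥ ((diagonal (fun i => ∑ j, B i j) - B) *ᵥ x))
      = ∑ i, ∑ j, B i j * (x i - x j) ^ 2 := by
  have hsymm : ∀ i j, B j i = B i j := fun i j => by simpa using hB.apply i j
  have hswap : ∑ i, ∑ j, B i j * x j ^ 2 = ∑ i, ∑ j, B i j * x i ^ 2 := by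
    rw [Finset.sum_comm]
    simp only [hsymm]
  have hform : x ⬝ᵥ ((diagonal (fun i => ∑ j, B i j) - B) *ᵥ x)
      = ∑ i, ∑ j, B i j * x i ^ 2 - ∑ i, ∑ j, B i j * x i * x j := by
    rw [sub_mulVec, dotProduct_sub]
    simp only [dotProduct, mulVec_diagonal]
    simp only [mulVec, dotProduct, Finset.mul_sum, Finset.sum_mul]
    congr 1 <;> refine Finset.sum_congr rfl fun i _ => Finset.sum_congr rfl fun j _ => by ring
  have hexpand : ∑ i, ∑ j, B i j * (x i - x j) ^ 2 = ∑ i, ∑ j, B i j * x i ^ 2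
      + ∑ i, ∑ j, B i j * x j ^ 2 - 2 * ∑ i, ∑ j, B i j * x i * x j := by
    simp only [Finset.mul_sum, ← Finset.sum_add_distrib, ← Finset.sum_sub_distrib]
    refine Finset.sum_congr rfl fun i _ => Finset.sum_congr rfl fun j _ => by ring
  rw [hform, hexpand, hswap]
  ring

theorem Matrix.posSemidef_diagonal_sum_sub {B : Matrix ι ι ℝ} (hB : B.IsHermitian)
    (hB_nonneg : ∀ i j, 0 ≤ B i j) : (diagonal (fun i => ∑ j, B i j) - B).PosSemidef := by
  refine .of_dotProduct_mulVec_nonneg ((isHermitian_diagonal _).sub hB) fun x => ?_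
  have hsum : 0 ≤ ∑ i, ∑ j, B i j * (x i - x j) ^ 2 :=
    Finset.sum_nonneg fun i _ => Finset.sum_nonneg fun j _ =>
      mul_nonneg (hB_nonneg i j) (sq_nonneg _)
  rw [← two_mul_dotProduct_diagonal_sum_sub_mulVec hB x] at hsum
  simpa using hsum

theorem Matrix.posSemidef_diagonal_mulVec_div_sub {A : Matrix ι ι ℝ} (hA : A.IsHermitian)
    (hA_nonneg : ∀ i j, 0 ≤ A i j) {h : ι → ℝ} (hh : ∀ i, 0 < h i) :
    (diagonal (fun i => (A *ᵥ h) i / h i) - A).PosSemidef := by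
  set B := (diagonal h)ᴴ * A * diagonal h
  have hB_apply : ∀ i j, B i j = h i * A i j * h j := fun i j => by
    simp [B, diagonal_mul, mul_diagonal]
  have hB_nonneg : ∀ i j, 0 ≤ B i j := fun i j => by
    rw [hB_apply]
    exact mul_nonneg (mul_nonneg (hh i).le (hA_nonneg i j)) (hh j).le
  have hconj : diagonal (fun i => (A *ᵥ h) i / h i) - A
      = (diagonal h⁻¹)ᴴ * (diagonal (fun i => ∑ j, B i j) - B) * diagonal h⁻¹ := by
    ext i j
    have hi := (hh i).ne'
    have hj := (hh j).ne'
    by_cases hij : i = j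
    · subst hij
      simp [hB_apply, diagonal_mul, mul_diagonal, mulVec, dotProduct]
      field_simp
      simp only [mul_sub, Finset.mul_sum, mul_assoc, sq]
    · simp [hB_apply, hij, diagonal_mul, mul_diagonal]
      field_simp
  rw [hconj]
  exact (posSemidef_diagonal_sum_sub (isHermitian_conjTranspose_mul_mul _ hA) hB_nonneg)
    |>.conjTranspose_mul_mul_same _

/-- With `K = diag((Wᵀ diag(ω) W hᵗ + ε·1) ⊘ hᵗ)`, the matrix `K - Wᵀ diag(ω) W` is
positive semi-definite. -/
theorem stmt3 {m n : ℕ} (W : Matrix (Fin m) (Fin n) ℝ) (hW : ∀ i j, 0 ≤ W i j)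
    (ω : Fin m → ℝ) (hω : ∀ i, ω i = 0 ∨ ω i = 1)
    (h : Fin n → ℝ) (hh : ∀ i, 0 < h i) (ε : ℝ) (hε : 0 < ε) :
    (Matrix.diagonal (fun i => ((Wᵀ * Matrix.diagonal ω * W).mulVec h i + ε) / h i)
      - Wᵀ * Matrix.diagonal ω * W).PosSemidef := by
  have hω_nonneg : ∀ i, 0 ≤ ω i := fun i => by rcases hω i with hi | hi <;> simp [hi]
  set A := Wᵀ * diagonal ω * W
  have hA : A.IsHermitian := by
    simpa [conjTranspose_eq_transpose_of_trivial] using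
      isHermitian_conjTranspose_mul_mul W (isHermitian_diagonal ω)
  have hsplit : diagonal (fun i => ((A *ᵥ h) i + ε) / h i) - A
      = (diagonal (fun i => (A *ᵥ h) i / h i) - A) + diagonal (fun i => ε / h i) := by
    simp only [add_div, ← diagonal_add]
    abel
  rw [hsplit]
  exact (posSemidef_diagonal_mulVec_div_sub hA
      (transpose_mul_diagonal_mul_self_apply_nonneg hW hω_nonneg) hh).add
    (.diagonal fun i => div_nonneg hε.le (hh i).le)
end

section
/- Let Q ∈ R^{n×n} be symmetric positive definite, z ∈ R^n, and x* ≥ 0 satisfy the KKT conditions x*_i (Q x* + z)_i = 0 and (Q x* + z)_i ≥ 0 for all i. Then ||x*||_∞ ≤ sqrt(z^T Q^{-1} z / λ_min(Q)). -/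
/-!
Complementarity turns `x*ᵀQx* + zᵀx* = x*ᵀ(Qx* + z)` into `0`, while the objective is bounded
below by its unconstrained minimum: `x*ᵀQx* + 2zᵀx* ≥ -zᵀQ⁻¹z`. Together they give
`x*ᵀQx* ≤ zᵀQ⁻¹z`, and the Rayleigh bound `λ_min(Q) ‖x*‖₂² ≤ x*ᵀQx*` with
`‖x*‖_∞ ≤ ‖x*‖₂` finishes.
-/

open Matrix

namespace Matrix

open Unitary in
open scoped ComplexOrder in
lemma IsHermitian.posSemidef_sub_smul_one_iff {ι 𝕜 : Type*} [Fintype ι] [DecidableEq ι]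
    [RCLike 𝕜] {A : Matrix ι ι 𝕜} (hA : A.IsHermitian) (c : ℝ) :
    (A - (c : 𝕜) • 1).PosSemidef ↔ ∀ j, c ≤ hA.eigenvalues j := by
  have hconj : A - (c : 𝕜) • 1 = conjStarAlgAut 𝕜 _ hA.eigenvectorUnitary
      (diagonal fun j ↦ ((hA.eigenvalues j - c : ℝ) : 𝕜)) := by
    conv_lhs => rw [hA.spectral_theorem]
    rw [← map_one (conjStarAlgAut 𝕜 (Matrix ι ι 𝕜) hA.eigenvectorUnitary), ← map_smul,
      ← map_sub]
    congr 1
    rw [smul_one_eq_diagonal, diagonal_sub]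
    simp
  rw [hconj, conjStarAlgAut_apply, isUnit_coe.posSemidef_star_right_conjugate_iff]
  simp [posSemidef_diagonal_iff]

variable {ι : Type*} [Fintype ι] {A : Matrix ι ι ℝ}

lemma IsHermitian.iInf_eigenvalues_mul_dotProduct_self_le [DecidableEq ι] (hA : A.IsHermitian)
    (v : ι → ℝ) :
    (⨅ j, hA.eigenvalues j) * (v ⬝ᵥ v) ≤ v ⬝ᵥ A *ᵥ v := by
  have hpsd := (hA.posSemidef_sub_smul_one_iff _).2 fun j ↦ ciInf_le (Finite.bddBelow_range _) j
  simpa [sub_mulVec, dotProduct_sub, smul_mulVec] using hpsd.dotProduct_mulVec_nonneg v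

lemma PosDef.iInf_eigenvalues_pos [DecidableEq ι] [Nonempty ι] (hA : A.PosDef) :
    0 < ⨅ j, hA.1.eigenvalues j := by
  obtain ⟨j, hj⟩ := exists_eq_ciInf_of_finite (f := hA.1.eigenvalues)
  exact hj ▸ hA.eigenvalues_pos j

lemma IsHermitian.dotProduct_mulVec_comm (hA : A.IsHermitian) (x w : ι → ℝ) :
    w ⬝ᵥ A *ᵥ x = x ⬝ᵥ A *ᵥ w := by
  rw [dotProduct_mulVec, dotProduct_comm, ← mulVec_transpose,
    ← conjTranspose_eq_transpose_of_trivial, hA.eq]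

lemma PosSemidef.neg_dotProduct_mulVec_self_le (hA : A.PosSemidef) (x w : ι → ℝ) :
    -(w ⬝ᵥ A *ᵥ w) ≤ x ⬝ᵥ A *ᵥ x + 2 * (x ⬝ᵥ A *ᵥ w) := by
  have := hA.dotProduct_mulVec_nonneg (x + w)
  simp only [star_trivial, mulVec_add, dotProduct_add, add_dotProduct,
    hA.1.dotProduct_mulVec_comm x w] at this
  linarith

lemma PosDef.neg_dotProduct_inv_mulVec_le [DecidableEq ι] (hA : A.PosDef) (x z : ι → ℝ) :
    -(z ⬝ᵥ A⁻¹ *ᵥ z) ≤ x ⬝ᵥ A *ᵥ x + 2 * (x ⬝ᵥ z) := by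
  have hz : A *ᵥ A⁻¹ *ᵥ z = z := by
    rw [mulVec_mulVec, mul_nonsing_inv _ ((isUnit_iff_isUnit_det A).1 hA.isUnit), one_mulVec]
  simpa [hz, dotProduct_comm z] using hA.posSemidef.neg_dotProduct_mulVec_self_le x (A⁻¹ *ᵥ z)

end Matrix

lemma sq_le_dotProduct_self {ι R : Type*} [Fintype ι] [CommRing R] [LinearOrder R]
    [IsStrictOrderedRing R] (v : ι → R) (i : ι) : v i ^ 2 ≤ v ⬝ᵥ v := by
  simpa [dotProduct, sq] using
    Finset.single_le_sum (fun j _ ↦ mul_self_nonneg (v j)) (Finset.mem_univ i)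

theorem stmt9_general {n : ℕ} (Q : Matrix (Fin n) (Fin n) ℝ) (hQ : Q.PosDef)
    (z xstar : Fin n → ℝ)
    (hkkt1 : ∀ i, xstar i * (Q.mulVec xstar + z) i = 0) :
    ∀ i, |xstar i| ≤ Real.sqrt ((z ⬝ᵥ Q⁻¹.mulVec z) / (⨅ j, hQ.1.eigenvalues j)) := by
  intro i
  have : Nonempty (Fin n) := ⟨i⟩
  have hcompl : xstar ⬝ᵥ Q *ᵥ xstar + xstar ⬝ᵥ z = 0 := by
    rw [← dotProduct_add]
    exact Finset.sum_eq_zero fun j _ ↦ hkkt1 j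
  have hquad : xstar ⬝ᵥ Q *ᵥ xstar ≤ z ⬝ᵥ Q⁻¹ *ᵥ z := by
    linarith [hQ.neg_dotProduct_inv_mulVec_le xstar z]
  refine Real.abs_le_sqrt ((le_div_iff₀ hQ.iInf_eigenvalues_pos).2 ?_)
  calc xstar i ^ 2 * ⨅ j, hQ.1.eigenvalues j
      ≤ (⨅ j, hQ.1.eigenvalues j) * (xstar ⬝ᵥ xstar) := by
        rw [mul_comm]
        gcongr
        · exact hQ.iInf_eigenvalues_pos.le
        · exact sq_le_dotProduct_self xstar i
    _ ≤ xstar ⬝ᵥ Q *ᵥ xstar := hQ.1.iInf_eigenvalues_mul_dotProduct_self_le xstar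
    _ ≤ z ⬝ᵥ Q⁻¹ *ᵥ z := hquad

/-- KKT points of `min_{x ≥ 0} (1/2)xᵀQx + zᵀx` with `Q` symmetric positive definite satisfy
`‖x*‖_∞ ≤ √(zᵀ Q⁻¹ z / λ_min(Q))`. -/
theorem stmt9 {n : ℕ} [NeZero n] (Q : Matrix (Fin n) (Fin n) ℝ) (hQ : Q.PosDef)
    (z xstar : Fin n → ℝ) (hx : ∀ i, 0 ≤ xstar i)
    (hkkt1 : ∀ i, xstar i * (Q.mulVec xstar + z) i = 0)
    (hkkt2 : ∀ i, 0 ≤ (Q.mulVec xstar + z) i) :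
    ∀ i, |xstar i| ≤ Real.sqrt ((z ⬝ᵥ Q⁻¹.mulVec z) / (⨅ j, hQ.1.eigenvalues j)) :=
  stmt9_general Q hQ z xstar hkkt1
end

section
/- Let x* ≥ 0 be a KKT point of min_{x≥0} (1/2)x^T Q x + z^T x with Q symmetric positive definite, and suppose a coordinate i is perturbed: x = x* + ε e_i with ε > -x*_i, ε ≠ 0. After one PQP multiplicative update x'_i = x_i (N_i x + z_i^-)/(P_i x + z_i^+) with Q = P - N (P = (Q)_+ + diag(γ), N = (-Q)_+ + diag(γ)), z = z^+ - z^- (z^+ = (z)_+ + φ, z^- = (-z)_+ + φ), the error ratio satisfies |x'_i - x*_i| / |x_i - x*_i| = |N_i x* + ε γ_i + z_i^- - x*_i Q_{ii}| / (P_i x* + ε Q_{ii} + ε γ_i + z_i^+), and this ratio is strictly less than 1 whenever P_i x* + N_i x* + 2εγ_i + εQ_{ii} + z_i^+ + z_i^- - x*_i Q_{ii} > 0. -/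
open Matrix

/-!
Write `x = x* + ε eᵢ`. Since `Pᵢᵢ = Qᵢᵢ + γᵢ` and `Nᵢᵢ = γᵢ`, the update only involves the scalars
`A = Pᵢx*`, `B = Nᵢx*` and the KKT residual `w = (Qx* + z)ᵢ`, which are linked by
`A + z⁺ᵢ = B + z⁻ᵢ + w` because `P - N = Q` and `z⁺ - z⁻ = z`. Complementary slackness `x*ᵢ w = 0`
then gives `x'ᵢ - x*ᵢ = ε · num / D` with `num = B + εγᵢ + z⁻ᵢ - x*ᵢQᵢᵢ` and
`D = A + εQᵢᵢ + εγᵢ + z⁺ᵢ`. Finally `D - num = w + (x*ᵢ + ε) Qᵢᵢ > 0`, so `|num| < D` as soon as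
`D + num > 0`, which is the stated condition.
-/

namespace Matrix

theorem mul_le_mulVec_apply_of_nonneg {m R : Type*} [Fintype m] [Semiring R] [PartialOrder R]
    [IsOrderedRing R] {M : Matrix m m R} {x : m → R}
    (hM : ∀ u v, 0 ≤ M u v) (hx : ∀ j, 0 ≤ x j) (i : m) :
    M i i * x i ≤ (M *ᵥ x) i :=
  Finset.single_le_sum (f := fun j => M i j * x j)
    (fun j _ => mul_nonneg (hM i j) (hx j)) (Finset.mem_univ i)

theorem mulVec_add_smul_single_apply {m R : Type*} [Fintype m] [DecidableEq m] [CommRing R]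
    (M : Matrix m m R) (x : m → R) (ε : R) (i : m) :
    (M *ᵥ (x + ε • Pi.single i 1)) i = (M *ᵥ x) i + ε * M i i := by
  simp [mulVec_add, mulVec_smul]

section Split

variable {m R : Type*} [DecidableEq m] [Ring R] [LinearOrder R]

/-- The paper's splitting `Q = P - N` has `P = posSplit Q γ` and `N = posSplit (-Q) γ`. -/
def posSplit (Q : Matrix m m R) (γ : m → R) : Matrix m m R :=
  of (fun u v => max (Q u v) 0) + diagonal γ

theorem posSplit_apply_self (Q : Matrix m m R) (γ : m → R) (i : m) :
    posSplit Q γ i i = max (Q i i) 0 + γ i := by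
  simp [posSplit]

variable [IsOrderedRing R]

theorem posSplit_sub_posSplit_neg (Q : Matrix m m R) (γ : m → R) :
    posSplit Q γ - posSplit (-Q) γ = Q := by
  ext u v
  simp [posSplit]

theorem posSplit_nonneg {Q : Matrix m m R} {γ : m → R} (hγ : ∀ j, 0 ≤ γ j) (u v : m) :
    0 ≤ posSplit Q γ u v := by
  rcases eq_or_ne u v with rfl | huv
  · simpa [posSplit] using add_nonneg (le_max_right (Q u u) 0) (hγ u)
  · simp [posSplit, diagonal_apply_ne _ huv]

end Split

end Matrix

section ScalarUpdate

/- `a = x*ᵢ`, `q = Qᵢᵢ`, `g = γᵢ`, `A = Pᵢx*`, `B = Nᵢx*`, `w = (Qx* + z)ᵢ`. -/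
variable {a ε q g A B zp zm w : ℝ}

theorem update_denom_pos (hq : 0 < q) (hg : 0 ≤ g) (hzp : 0 ≤ zp) (hA : (q + g) * a ≤ A)
    (hεa : -a < ε) : 0 < A + ε * q + ε * g + zp := by
  nlinarith

theorem update_sub_eq (hkey : A + zp = B + zm + w) (hcs : a * w = 0)
    (hD : A + ε * q + ε * g + zp ≠ 0) :
    (a + ε) * (B + ε * g + zm) / (A + ε * (q + g) + zp) - a =
      ε * (B + ε * g + zm - a * q) / (A + ε * q + ε * g + zp) := by
  rw [eq_div_iff hD, sub_mul, mul_add ε q g, ← add_assoc, div_mul_cancel₀ _ hD]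
  linear_combination (-a) * hkey - hcs

theorem abs_update_num_lt_denom (hq : 0 < q) (hw : 0 ≤ w) (hkey : A + zp = B + zm + w)
    (hεa : -a < ε) (h : 0 < A + B + 2 * ε * g + ε * q + zp + zm - a * q) :
    |B + ε * g + zm - a * q| < A + ε * q + ε * g + zp := by
  have hgap : 0 < w + (a + ε) * q := by nlinarith
  rw [abs_lt]
  constructor <;> linarith

end ScalarUpdate

/-- One PQP multiplicative update, started from a one-coordinate perturbation `x = x* + ε eᵢ`
of a KKT point `x*`, has error ratio
`|x'ᵢ - x*ᵢ|/|xᵢ - x*ᵢ| = |Nᵢx* + εγᵢ + z⁻ᵢ - x*ᵢ Qᵢᵢ| / (Pᵢx* + εQᵢᵢ + εγᵢ + z⁺ᵢ)`,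
which is strictly less than `1` whenever
`Pᵢx* + Nᵢx* + 2εγᵢ + εQᵢᵢ + z⁺ᵢ + z⁻ᵢ - x*ᵢQᵢᵢ > 0`. -/
theorem stmt16 {n : ℕ} (Q : Matrix (Fin n) (Fin n) ℝ) (hQ : Q.PosDef)
    (z γ φ xstar : Fin n → ℝ) (hγ : ∀ i, 0 ≤ γ i) (hφ : ∀ i, 0 ≤ φ i)
    (hx : ∀ i, 0 ≤ xstar i)
    (hkkt1 : ∀ i, xstar i * (Q.mulVec xstar + z) i = 0)
    (hkkt2 : ∀ i, 0 ≤ (Q.mulVec xstar + z) i)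
    (i : Fin n) (ε : ℝ) (hε : ε ≠ 0) (hεl : -xstar i < ε) :
    let P : Matrix (Fin n) (Fin n) ℝ :=
      Matrix.of (fun u v => max (Q u v) 0) + Matrix.diagonal γ
    let N : Matrix (Fin n) (Fin n) ℝ :=
      Matrix.of (fun u v => max (-Q u v) 0) + Matrix.diagonal γ
    let zp : Fin n → ℝ := fun u => max (z u) 0 + φ u
    let zm : Fin n → ℝ := fun u => max (-z u) 0 + φ u
    let x : Fin n → ℝ := xstar + ε • (Pi.single i 1 : Fin n → ℝ)
    let x' : ℝ := x i * (N.mulVec x i + zm i) / (P.mulVec x i + zp i)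
    (|x' - xstar i| / |x i - xstar i| =
        |N.mulVec xstar i + ε * γ i + zm i - xstar i * Q i i| /
          (P.mulVec xstar i + ε * Q i i + ε * γ i + zp i)) ∧
    (0 < P.mulVec xstar i + N.mulVec xstar i + 2 * ε * γ i + ε * Q i i
          + zp i + zm i - xstar i * Q i i →
      |x' - xstar i| / |x i - xstar i| < 1) := by
  intro P N zp zm x x'
  have hP : P = posSplit Q γ := rfl
  have hN : N = posSplit (-Q) γ := rfl
  have hQii : 0 < Q i i := hQ.diag_pos
  have hxi : x i = xstar i + ε := by simp [x]
  have hPx : (P *ᵥ x) i = (P *ᵥ xstar) i + ε * (Q i i + γ i) := by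
    rw [mulVec_add_smul_single_apply, hP, posSplit_apply_self, max_eq_left hQii.le]
  have hNx : (N *ᵥ x) i = (N *ᵥ xstar) i + ε * γ i := by
    rw [mulVec_add_smul_single_apply, hN, posSplit_apply_self, neg_apply,
      max_eq_right (neg_nonpos.mpr hQii.le), zero_add]
  have hkey : (P *ᵥ xstar) i + zp i = (N *ᵥ xstar) i + zm i + (Q *ᵥ xstar + z) i := by
    have hz : zp i - zm i = z i := by simp [zp, zm]
    have hQx := congrFun (congrArg (· *ᵥ xstar) (posSplit_sub_posSplit_neg Q γ)) i
    simp only [sub_mulVec, Pi.sub_apply] at hQx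
    simp only [Pi.add_apply, ← hQx, ← hz, hP, hN]
    ring
  have hA : (Q i i + γ i) * xstar i ≤ (P *ᵥ xstar) i := by
    simpa [hP, posSplit_apply_self, max_eq_left hQii.le] using
      mul_le_mulVec_apply_of_nonneg (posSplit_nonneg (Q := Q) hγ) hx i
  have hzp : 0 ≤ zp i := add_nonneg (le_max_right _ _) (hφ i)
  have hD := update_denom_pos hQii (hγ i) hzp hA hεl
  have hstep : x' - xstar i = ε * ((N *ᵥ xstar) i + ε * γ i + zm i - xstar i * Q i i) /
      ((P *ᵥ xstar) i + ε * Q i i + ε * γ i + zp i) := by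
    simp only [x', hxi, hPx, hNx]
    exact update_sub_eq hkey (hkkt1 i) hD.ne'
  have hratio : |x' - xstar i| / |x i - xstar i| =
      |(N *ᵥ xstar) i + ε * γ i + zm i - xstar i * Q i i| /
        ((P *ᵥ xstar) i + ε * Q i i + ε * γ i + zp i) := by
    rw [hstep, hxi, add_sub_cancel_left, abs_div, abs_mul, abs_of_pos hD, mul_div_assoc,
      mul_div_cancel_left₀ _ (abs_ne_zero.mpr hε)]
  refine ⟨hratio, fun hcond => ?_⟩
  rw [hratio, div_lt_one hD]
  exact abs_update_num_lt_denom hQii (hkkt2 i) hkey hεl hcond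
end
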